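/- Let λ, μ, ν be compositions of r, v ∈ W_{λ,μ}, and w ∈ W_{μ,ν}. Then in the Hecke algebra, T_v · T_w lies in the R-span of {T_u : u ∈ W_{λ,ν}}. -/

import Mathlib

open Equiv Finset

noncomputable section

/-- Coxeter length of a permutation of `Fin r` = number of inversions. -/
def permLength {r : ℕ} (w : Equiv.Perm (Fin r)) : ℕ :=
  (Finset.univ.filter (fun p : Fin r × Fin r => p.1 < p.2 ∧ w p.2 < w p.1)).card

/-- the simple transpositions `(i, i+1)`. -/
def IsSimpleTransposition {r : ℕ} (s : Equiv.Perm (Fin r)) : Prop :=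
  ∃ (i : ℕ) (h : i + 1 < r), s = Equiv.swap ⟨i, Nat.lt_of_succ_lt h⟩ ⟨i + 1, h⟩

/-- strong Bruhat order: `u ⊴ v` iff `u` is the product of a sublist of a reduced word for `v`. -/
def BruhatLE {r : ℕ} (u v : Equiv.Perm (Fin r)) : Prop :=
  ∃ L : List (Equiv.Perm (Fin r)),
    (∀ s ∈ L, IsSimpleTransposition s) ∧ L.prod = v ∧ L.length = permLength v ∧
      ∃ L' : List (Equiv.Perm (Fin r)), L'.Sublist L ∧ L'.prod = u

def partialSum (f : ℕ → ℕ) (e : ℕ) : ℕ := ∑ j ∈ Finset.range e, f j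

/-- a composition of `r`: a (finitely supported) sequence of non-negative integers summing to `r`. -/
def IsCompositionOf (f : ℕ → ℕ) (r : ℕ) : Prop :=
  (Function.support f).Finite ∧ ∑ᶠ i, f i = r

/-- dominance order on compositions: `DomLE f g` means `f ⊴ g`. -/
def DomLE (f g : ℕ → ℕ) : Prop := ∀ e : ℕ, partialSum f e ≤ partialSum g e

/-- (0-indexed) row of the box `b` in the Young diagram of the composition `f`,
boxes being numbered `0, 1, 2, …` along the rows. -/
def rowIndex {r : ℕ} (f : ℕ → ℕ) (b : Fin r) : ℕ :=
  sInf {i : ℕ | (b : ℕ) < partialSum f (i + 1)}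

/-- the Young (standard parabolic) subgroup `W_f`, as a set of permutations. -/
def YoungSubgroup {r : ℕ} (f : ℕ → ℕ) : Set (Equiv.Perm (Fin r)) :=
  {w | ∀ b : Fin r, rowIndex f (w b) = rowIndex f b}

/-- `W_{f,g}`; positions are acted on on the right, `(b)w = w⁻¹ b`. -/
def Wlm {r : ℕ} (f g : ℕ → ℕ) : Set (Equiv.Perm (Fin r)) :=
  {w | ∀ (i : ℕ) (b : Fin r), i ≤ rowIndex f b → i ≤ rowIndex g (w⁻¹ b)}

/-- `D_f`: minimal length representatives of the cosets `W_f d`. -/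
def minimalCosetReps {r : ℕ} (f : ℕ → ℕ) : Set (Equiv.Perm (Fin r)) :=
  {d | ∀ π ∈ YoungSubgroup (r := r) f, permLength d ≤ permLength (π * d)}

/-- a tableau of shape `f` is encoded by its entry function, a permutation of the boxes;
the tableau `t^f d` corresponds to the entry function `d⁻¹`. -/
def IsRowStandard {r : ℕ} (f : ℕ → ℕ) (t : Equiv.Perm (Fin r)) : Prop :=
  ∀ b₁ b₂ : Fin r, rowIndex f b₁ = rowIndex f b₂ → b₁ < b₂ → t b₁ < t b₂

/-- generalized tableaux are functions `Fin r → ℕ`; content `g` (0-indexed entries). -/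
def HasContent {r : ℕ} (g : ℕ → ℕ) (T : Fin r → ℕ) : Prop :=
  ∀ i : ℕ, (Finset.univ.filter (fun b => T b = i)).card = g i

def IsRowSemistandard {r : ℕ} (f : ℕ → ℕ) (T : Fin r → ℕ) : Prop :=
  ∀ b₁ b₂ : Fin r, rowIndex f b₁ = rowIndex f b₂ → b₁ ≤ b₂ → T b₁ ≤ T b₂

/-- ascending: every entry in row `i` is `≥ i`. -/
def IsAscending {r : ℕ} (f : ℕ → ℕ) (T : Fin r → ℕ) : Prop :=
  ∀ b : Fin r, rowIndex f b ≤ T b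

/-- `T^λ_g`: the boxes filled in the natural order with `g 0` zeroes, `g 1` ones, … -/
def stdTableau {r : ℕ} (g : ℕ → ℕ) : Fin r → ℕ := fun b => rowIndex g b

/-- conjugate (dual) of a partition. -/
def conjFn (l : ℕ → ℕ) : ℕ → ℕ := fun i => Nat.card {k : ℕ | i + 1 ≤ l k}

/-- (row, column) coordinates of box `b` in the diagram of `f`. -/
def boxPlace {r : ℕ} (f : ℕ → ℕ) (b : Fin r) : ℕ × ℕ :=
  (rowIndex f b, (b : ℕ) - partialSum f (rowIndex f b))

section perm
variable {r : ℕ}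

lemma permLength_inv (u : Equiv.Perm (Fin r)) : permLength u⁻¹ = permLength u := by
  unfold permLength
  apply Finset.card_bij' (i := fun p _ => (u⁻¹ p.2, u⁻¹ p.1)) (j := fun p _ => (u p.2, u p.1))
  · intro p hp
    simp only [mem_filter, mem_univ, true_and] at hp ⊢
    simpa using hp.symm
  · intro p hp
    simp only [mem_filter, mem_univ, true_and] at hp ⊢
    constructor
    · exact hp.2
    · simpa using hp.1
  · intro p hp; simp
  · intro p hp; simp

lemma swap_lt_swap {k : ℕ} (hk : k + 1 < r) {p₁ p₂ : Fin r} (h12 : p₁ < p₂)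
    (hne : ¬(p₁ = ⟨k, Nat.lt_of_succ_lt hk⟩ ∧ p₂ = ⟨k+1, hk⟩)) :
    Equiv.swap ⟨k, Nat.lt_of_succ_lt hk⟩ ⟨k+1, hk⟩ p₁ < Equiv.swap ⟨k, Nat.lt_of_succ_lt hk⟩ ⟨k+1, hk⟩ p₂ := by
  set a : Fin r := ⟨k, Nat.lt_of_succ_lt hk⟩
  set a' : Fin r := ⟨k+1, hk⟩
  have hv : ∀ x : Fin r, ((Equiv.swap a a' x : Fin r) : ℕ) =
      if (x:ℕ) = k then k+1 else if (x:ℕ) = k+1 then k else (x:ℕ) := by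
    intro x
    rcases eq_or_ne x a with rfl | hxa
    · simp [a, a']
    · rcases eq_or_ne x a' with rfl | hxa'
      · simp [a, a', Fin.ext_iff]
      · rw [Equiv.swap_apply_of_ne_of_ne hxa hxa']
        have h1 : (x:ℕ) ≠ k := fun h => hxa (Fin.ext h)
        have h2 : (x:ℕ) ≠ k+1 := fun h => hxa' (Fin.ext h)
        simp [h1, h2]
  have h12' : (p₁:ℕ) < (p₂:ℕ) := h12
  have hne' : ¬((p₁:ℕ) = k ∧ (p₂:ℕ) = k+1) := by
    intro ⟨h1, h2⟩; exact hne ⟨Fin.ext h1, Fin.ext h2⟩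
  have := hv p₁; have := hv p₂
  show (_ : Fin r) < _
  rw [Fin.lt_iff_val_lt_val, hv p₁, hv p₂]
  split_ifs <;> omega

end perm

section P1
variable {r : ℕ}

lemma permLength_mul_swap (u : Equiv.Perm (Fin r)) {k : ℕ} (hk : k + 1 < r) :
    (u ⟨k, Nat.lt_of_succ_lt hk⟩ < u ⟨k+1, hk⟩ →
      permLength (u * Equiv.swap ⟨k, Nat.lt_of_succ_lt hk⟩ ⟨k+1, hk⟩) = permLength u + 1) ∧
    (u ⟨k+1, hk⟩ < u ⟨k, Nat.lt_of_succ_lt hk⟩ →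
      permLength (u * Equiv.swap ⟨k, Nat.lt_of_succ_lt hk⟩ ⟨k+1, hk⟩) + 1 = permLength u) := by
  set a : Fin r := ⟨k, Nat.lt_of_succ_lt hk⟩ with ha
  set a' : Fin r := ⟨k+1, hk⟩ with ha'
  set s := Equiv.swap a a' with hs
  have haa' : a < a' := by simp [ha, ha', Fin.lt_iff_val_lt_val]
  have hsa : s a = a' := Equiv.swap_apply_left _ _
  have hsa' : s a' = a := Equiv.swap_apply_right _ _
  set S1 := (Finset.univ.filter (fun p : Fin r × Fin r => p.1 < p.2 ∧ (u * s) p.2 < (u * s) p.1)) with hS1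
  set S0 := (Finset.univ.filter (fun p : Fin r × Fin r => p.1 < p.2 ∧ u p.2 < u p.1)) with hS0
  have hcard : (S1.erase (a, a')).card = (S0.erase (a, a')).card := by
    apply Finset.card_bij' (i := fun p _ => (s p.1, s p.2)) (j := fun p _ => (s p.1, s p.2))
    · intro p hp
      simp only [mem_erase, hS1, mem_filter, mem_univ, true_and] at hp
      obtain ⟨hpne, h12, hlt⟩ := hp
      have hne : ¬(p.1 = a ∧ p.2 = a') := by
        intro ⟨h1, h2⟩; exact hpne (by rw [← h1, ← h2])
      simp only [mem_erase, hS0, mem_filter, mem_univ, true_and]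
      refine ⟨?_, swap_lt_swap hk h12 hne, ?_⟩
      · intro hcontr
        have h1 : s p.1 = a := congrArg Prod.fst hcontr
        have h2 : s p.2 = a' := congrArg Prod.snd hcontr
        rw [Equiv.apply_eq_iff_eq_symm_apply] at h1 h2
        simp only [hs, Equiv.symm_swap] at h1 h2
        rw [Equiv.swap_apply_left] at h1
        rw [Equiv.swap_apply_right] at h2
        rw [h1, h2] at h12
        exact absurd haa' (not_lt.mpr (le_of_lt h12))
      · simpa [Equiv.Perm.mul_apply] using hlt
    · intro p hp
      simp only [mem_erase, hS0, mem_filter, mem_univ, true_and] at hp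
      obtain ⟨hpne, h12, hlt⟩ := hp
      have hne : ¬(p.1 = a ∧ p.2 = a') := by
        intro ⟨h1, h2⟩; exact hpne (by rw [← h1, ← h2])
      simp only [mem_erase, hS1, mem_filter, mem_univ, true_and]
      refine ⟨?_, swap_lt_swap hk h12 hne, ?_⟩
      · intro hcontr
        have h1 : s p.1 = a := congrArg Prod.fst hcontr
        have h2 : s p.2 = a' := congrArg Prod.snd hcontr
        rw [Equiv.apply_eq_iff_eq_symm_apply] at h1 h2
        simp only [hs, Equiv.symm_swap] at h1 h2
        rw [Equiv.swap_apply_left] at h1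
        rw [Equiv.swap_apply_right] at h2
        rw [h1, h2] at h12
        exact absurd haa' (not_lt.mpr (le_of_lt h12))
      · simp only [Equiv.Perm.mul_apply, hs, Equiv.swap_apply_self]
        exact hlt
    · intro p hp; simp only [hs, Equiv.swap_apply_self]
    · intro p hp; simp only [hs, Equiv.swap_apply_self]
  have hm1 : (a, a') ∈ S1 ↔ u a < u a' := by
    rw [hS1, Finset.mem_filter]
    simp [haa', Equiv.Perm.mul_apply, hsa, hsa']
  have hm0 : (a, a') ∈ S0 ↔ u a' < u a := by
    simp [hS0, haa']
  have key : ∀ (S : Finset (Fin r × Fin r)), S.card = (S.erase (a,a')).card + (if (a,a') ∈ S then 1 else 0) := by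
    intro S
    by_cases h : (a,a') ∈ S
    · rw [if_pos h, Finset.card_erase_add_one h]
    · rw [if_neg h, Finset.erase_eq_of_notMem h, Nat.add_zero]
  constructor
  · intro hlt
    have h1 : (a,a') ∈ S1 := hm1.mpr hlt
    have h0 : (a,a') ∉ S0 := fun h => absurd (hm0.mp h) (not_lt.mpr (le_of_lt hlt))
    show S1.card = S0.card + 1
    rw [key S1, key S0, if_pos h1, if_neg h0, hcard]
  · intro hlt
    have h1 : (a,a') ∉ S1 := fun h => absurd (hm1.mp h) (not_lt.mpr (le_of_lt hlt))
    have h0 : (a,a') ∈ S0 := hm0.mpr hlt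
    show S1.card + 1 = S0.card
    rw [key S1, key S0, if_pos h0, if_neg h1, hcard]

end P1

section basic
variable {r : ℕ}

lemma permLength_one : permLength (1 : Equiv.Perm (Fin r)) = 0 := by
  unfold permLength
  rw [Finset.card_eq_zero, Finset.filter_eq_empty_iff]
  rintro p -
  simp only [Equiv.Perm.one_apply]
  rintro ⟨h1, h2⟩
  exact absurd h1 (not_lt.mpr (le_of_lt h2))

lemma exists_descent (u : Equiv.Perm (Fin r)) (hu : u ≠ 1) :
    ∃ (k : ℕ) (hk : k + 1 < r), u ⟨k+1, hk⟩ < u ⟨k, Nat.lt_of_succ_lt hk⟩ := by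
  by_contra hcon
  push_neg at hcon
  have hadj : ∀ (k : ℕ) (hk : k + 1 < r), u ⟨k, Nat.lt_of_succ_lt hk⟩ < u ⟨k+1, hk⟩ := by
    intro k hk
    rcases lt_trichotomy (u ⟨k, Nat.lt_of_succ_lt hk⟩) (u ⟨k+1, hk⟩) with h | h | h
    · exact h
    · exfalso
      have : (⟨k, Nat.lt_of_succ_lt hk⟩ : Fin r) = ⟨k+1, hk⟩ := u.injective h
      simp [Fin.ext_iff] at this
    · exact absurd h (not_lt.mpr (hcon k hk))
  have hmono : StrictMono u := by
    have hstep : ∀ (d m : ℕ) (hm : m + d < r), u ⟨m, by omega⟩ ≤ u ⟨m + d, hm⟩ := by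
      intro d
      induction d with
      | zero => intro m hm; exact le_refl _
      | succ d ih =>
        intro m hm
        have h1 : m + d < r := by omega
        have h2 := lt_of_le_of_lt (ih m h1) (hadj (m + d) (by omega))
        have he : (⟨m + d + 1, by omega⟩ : Fin r) = ⟨m + (d+1), hm⟩ := by
          apply Fin.ext; simp; omega
        rw [he] at h2
        exact le_of_lt h2
    intro x y hxy
    have hxy' : (x:ℕ) < (y:ℕ) := hxy
    have h1 : u ⟨x, x.isLt⟩ ≤ u ⟨(x:ℕ) + ((y:ℕ) - (x:ℕ)), by omega⟩ := hstep ((y:ℕ)-(x:ℕ)) x (by omega)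
    have hx : (⟨(x:ℕ), x.isLt⟩ : Fin r) = x := by simp
    have hy : (⟨(x:ℕ) + ((y:ℕ) - (x:ℕ)), by omega⟩ : Fin r) = y := by
      apply Fin.ext; simp; omega
    rw [hx, hy] at h1
    rcases lt_or_eq_of_le h1 with h | h
    · exact h
    · exact absurd (u.injective h) (by intro hh; rw [hh] at hxy; exact lt_irrefl _ hxy)
  have hmono' : StrictMono (u⁻¹ : Equiv.Perm (Fin r)) := by
    intro x y hxy
    rcases lt_trichotomy ((u⁻¹ : Equiv.Perm (Fin r)) x) (u⁻¹ y) with h | h | h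
    · exact h
    · exact absurd ((u⁻¹ : Equiv.Perm (Fin r)).injective h) (by intro hh; rw [hh] at hxy; exact lt_irrefl _ hxy)
    · exfalso
      have := hmono h
      simp at this
      exact absurd hxy (not_lt.mpr (le_of_lt this))
  have key : ∀ (v : Equiv.Perm (Fin r)), StrictMono v → ∀ (m : ℕ) (hm : m < r), m ≤ (v ⟨m, hm⟩ : ℕ) := by
    intro v hv m
    induction m with
    | zero => intro hm; omega
    | succ m ih =>
      intro hm
      have h1 : m < r := by omega
      have h2 : v ⟨m, h1⟩ < v ⟨m+1, hm⟩ := hv (by simp [Fin.lt_iff_val_lt_val])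
      have := ih h1
      have h3 : (v ⟨m, h1⟩ : ℕ) < (v ⟨m+1, hm⟩ : ℕ) := h2
      omega
  have hle : ∀ x : Fin r, (x:ℕ) ≤ (u x : ℕ) := by
    intro x
    have := key u hmono x x.isLt
    simpa using this
  have hle' : ∀ x : Fin r, (u x : ℕ) ≤ (x:ℕ) := by
    intro x
    have h1 := key u⁻¹ hmono' (u x) (u x).isLt
    have h2 : (⟨(u x : ℕ), (u x).isLt⟩ : Fin r) = u x := by simp
    rw [h2] at h1
    simpa using h1
  apply hu
  apply Equiv.ext
  intro x
  exact Fin.ext (le_antisymm (hle' x) (hle x))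

lemma eq_one_of_permLength_zero {u : Equiv.Perm (Fin r)} (h : permLength u = 0) : u = 1 := by
  by_contra hu
  obtain ⟨k, hk, hd⟩ := exists_descent u hu
  have : (⟨(⟨k, Nat.lt_of_succ_lt hk⟩ : Fin r), ⟨k+1, hk⟩⟩ : Fin r × Fin r) ∈
      (Finset.univ.filter (fun p : Fin r × Fin r => p.1 < p.2 ∧ u p.2 < u p.1)) := by
    simp only [mem_filter, mem_univ, true_and]
    exact ⟨by simp [Fin.lt_iff_val_lt_val], hd⟩
  have hpos : 0 < permLength u := Finset.card_pos.mpr ⟨_, this⟩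
  omega

end basic

section leftlen
variable {r : ℕ}

lemma permLength_swap_mul (u : Equiv.Perm (Fin r)) {k : ℕ} (hk : k + 1 < r) :
    ((u⁻¹ ⟨k, Nat.lt_of_succ_lt hk⟩ < u⁻¹ ⟨k+1, hk⟩) →
      permLength (Equiv.swap ⟨k, Nat.lt_of_succ_lt hk⟩ ⟨k+1, hk⟩ * u) = permLength u + 1) ∧
    ((u⁻¹ ⟨k+1, hk⟩ < u⁻¹ ⟨k, Nat.lt_of_succ_lt hk⟩) →
      permLength (Equiv.swap ⟨k, Nat.lt_of_succ_lt hk⟩ ⟨k+1, hk⟩ * u) + 1 = permLength u) := by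
  set s := Equiv.swap (⟨k, Nat.lt_of_succ_lt hk⟩ : Fin r) ⟨k+1, hk⟩ with hs
  have hinv : (s * u)⁻¹ = u⁻¹ * s := by
    rw [mul_inv_rev, hs, Equiv.swap_inv]
  have h1 : permLength (s * u) = permLength (u⁻¹ * s) := by
    rw [← permLength_inv (s * u), hinv]
  have h2 := permLength_mul_swap u⁻¹ hk
  rw [← permLength_inv u]
  constructor
  · intro h; rw [h1]; exact h2.1 h
  · intro h; rw [h1]; exact h2.2 h

end leftlen

section Nsec
variable {r : ℕ}

def Ncnt (u : Equiv.Perm (Fin r)) (i j : ℕ) : ℕ :=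
  ((Finset.univ : Finset (Fin r)).filter (fun a : Fin r => (a:ℕ) ≤ i ∧ j ≤ ((u a : Fin r):ℕ))).card

def Ble (z v : Equiv.Perm (Fin r)) : Prop := ∀ i j : ℕ, Ncnt z i j ≤ Ncnt v i j

lemma Ble_refl (z : Equiv.Perm (Fin r)) : Ble z z := fun _ _ => le_refl _

lemma Ble_trans {x y z : Equiv.Perm (Fin r)} (h1 : Ble x y) (h2 : Ble y z) : Ble x z :=
  fun i j => le_trans (h1 i j) (h2 i j)

lemma Ncnt_succ (u : Equiv.Perm (Fin r)) (i : ℕ) (c : Fin r) :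
    Ncnt u i (c:ℕ) = Ncnt u i ((c:ℕ)+1) + (if ((u⁻¹ c : Fin r):ℕ) ≤ i then 1 else 0) := by
  unfold Ncnt
  have hsplit : (Finset.univ : Finset (Fin r)).filter (fun (a : Fin r) => (a:ℕ) ≤ i ∧ (c:ℕ) ≤ ((u a : Fin r):ℕ))
      = ((Finset.univ : Finset (Fin r)).filter (fun (a : Fin r) => (a:ℕ) ≤ i ∧ (c:ℕ)+1 ≤ ((u a : Fin r):ℕ)))
        ∪ ((Finset.univ : Finset (Fin r)).filter (fun (a : Fin r) => (a:ℕ) ≤ i ∧ u a = c)) := by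
    rw [← Finset.filter_or]
    apply Finset.filter_congr
    intro a _
    constructor
    · rintro ⟨h1, h2⟩
      rcases Nat.lt_or_ge (c:ℕ) ((u a : Fin r):ℕ) with h | h
      · exact Or.inl ⟨h1, h⟩
      · exact Or.inr ⟨h1, Fin.ext (by omega)⟩
    · rintro (⟨h1, h2⟩ | ⟨h1, h2⟩)
      · exact ⟨h1, by omega⟩
      · exact ⟨h1, by rw [h2]⟩
  rw [hsplit, Finset.card_union_of_disjoint]
  · congr 1
    have heq : (Finset.univ : Finset (Fin r)).filter (fun (a : Fin r) => (a:ℕ) ≤ i ∧ u a = c)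
        = if ((u⁻¹ c : Fin r):ℕ) ≤ i then {u⁻¹ c} else ∅ := by
      ext a
      simp only [Finset.mem_filter, Finset.mem_univ, true_and]
      constructor
      · rintro ⟨h1, h2⟩
        have : a = u⁻¹ c := by rw [← h2]; simp
        rw [this] at h1
        rw [if_pos h1]
        simp [this]
      · intro h
        by_cases hc : ((u⁻¹ c : Fin r):ℕ) ≤ i
        · rw [if_pos hc] at h
          simp at h
          subst h
          exact ⟨hc, by simp⟩
        · rw [if_neg hc] at h
          simp at h
    rw [heq]
    split_ifs <;> simp
  · rw [Finset.disjoint_filter]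
    rintro a _ ⟨h1, h2⟩ ⟨h3, h4⟩
    rw [h4] at h2
    omega

lemma Ncnt_swap_mul_ne (u : Equiv.Perm (Fin r)) {k : ℕ} (hk : k + 1 < r) (i jj : ℕ)
    (hjj : jj ≠ k + 1) :
    Ncnt (Equiv.swap ⟨k, Nat.lt_of_succ_lt hk⟩ ⟨k+1, hk⟩ * u) i jj = Ncnt u i jj := by
  unfold Ncnt
  congr 1
  apply Finset.filter_congr
  intro a _
  have hval : ∀ c : Fin r, (jj ≤ ((Equiv.swap (⟨k, Nat.lt_of_succ_lt hk⟩ : Fin r) ⟨k+1, hk⟩ c : Fin r):ℕ)) ↔ jj ≤ (c:ℕ) := by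
    intro c
    rcases eq_or_ne c ⟨k, Nat.lt_of_succ_lt hk⟩ with rfl | hca
    · rw [Equiv.swap_apply_left]; simp; omega
    · rcases eq_or_ne c ⟨k+1, hk⟩ with rfl | hca'
      · rw [Equiv.swap_apply_right]; simp; omega
      · rw [Equiv.swap_apply_of_ne_of_ne hca hca']
  rw [Equiv.Perm.mul_apply, hval (u a)]

lemma Ncnt_swap_mul_key (u : Equiv.Perm (Fin r)) {k : ℕ} (hk : k + 1 < r) (i : ℕ) :
    Ncnt (Equiv.swap ⟨k, Nat.lt_of_succ_lt hk⟩ ⟨k+1, hk⟩ * u) i (k+1)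
      + (if ((u⁻¹ ⟨k+1, hk⟩ : Fin r):ℕ) ≤ i then 1 else 0)
    = Ncnt u i (k+1) + (if ((u⁻¹ ⟨k, Nat.lt_of_succ_lt hk⟩ : Fin r):ℕ) ≤ i then 1 else 0) := by
  have e1 := Ncnt_succ (Equiv.swap (⟨k, Nat.lt_of_succ_lt hk⟩ : Fin r) ⟨k+1, hk⟩ * u) i ⟨k, Nat.lt_of_succ_lt hk⟩
  have e2 := Ncnt_succ u i (⟨k, Nat.lt_of_succ_lt hk⟩ : Fin r)
  have e3 : Ncnt (Equiv.swap (⟨k, Nat.lt_of_succ_lt hk⟩ : Fin r) ⟨k+1, hk⟩ * u) i k = Ncnt u i k :=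
    Ncnt_swap_mul_ne u hk i k (by omega)
  have hinva : ((Equiv.swap (⟨k, Nat.lt_of_succ_lt hk⟩ : Fin r) ⟨k+1, hk⟩ * u)⁻¹ ⟨k, Nat.lt_of_succ_lt hk⟩ : Fin r) = u⁻¹ ⟨k+1, hk⟩ := by
    rw [mul_inv_rev, Equiv.swap_inv]
    simp only [Equiv.Perm.mul_apply]
    rw [Equiv.swap_apply_left]
  have hca : ((⟨k, Nat.lt_of_succ_lt hk⟩ : Fin r) : ℕ) = k := rfl
  rw [hca] at e1 e2
  rw [hinva] at e1
  omega

end Nsec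

section Blesec
variable {r : ℕ}

lemma Ble_swap_right (v : Equiv.Perm (Fin r)) {k : ℕ} (hk : k + 1 < r)
    (hasc : v⁻¹ ⟨k, Nat.lt_of_succ_lt hk⟩ < v⁻¹ ⟨k+1, hk⟩) :
    Ble v (Equiv.swap ⟨k, Nat.lt_of_succ_lt hk⟩ ⟨k+1, hk⟩ * v) := by
  intro i jj
  by_cases hjj : jj = k + 1
  · subst hjj
    have key := Ncnt_swap_mul_key v hk i
    have hmono : ((v⁻¹ ⟨k+1, hk⟩ : Fin r) : ℕ) ≤ i → ((v⁻¹ ⟨k, Nat.lt_of_succ_lt hk⟩ : Fin r) : ℕ) ≤ i := by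
      intro h
      have : ((v⁻¹ ⟨k, Nat.lt_of_succ_lt hk⟩ : Fin r) : ℕ) < ((v⁻¹ ⟨k+1, hk⟩ : Fin r) : ℕ) := hasc
      omega
    split_ifs at key <;> omega
  · rw [Ncnt_swap_mul_ne v hk i jj hjj]

lemma Ble_swap_mono {z v : Equiv.Perm (Fin r)} {k : ℕ} (hk : k + 1 < r)
    (hasc : v⁻¹ ⟨k, Nat.lt_of_succ_lt hk⟩ < v⁻¹ ⟨k+1, hk⟩) (hz : Ble z v) :
    Ble (Equiv.swap ⟨k, Nat.lt_of_succ_lt hk⟩ ⟨k+1, hk⟩ * z)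
      (Equiv.swap ⟨k, Nat.lt_of_succ_lt hk⟩ ⟨k+1, hk⟩ * v) := by
  intro i jj
  by_cases hjj : jj = k + 1
  · subst hjj
    have keyz := Ncnt_swap_mul_key z hk i
    have keyv := Ncnt_swap_mul_key v hk i
    have ez := Ncnt_succ z i (⟨k+1, hk⟩ : Fin r)
    have ev := Ncnt_succ v i (⟨k+1, hk⟩ : Fin r)
    have ez2 := Ncnt_succ z i (⟨k, Nat.lt_of_succ_lt hk⟩ : Fin r)
    have ev2 := Ncnt_succ v i (⟨k, Nat.lt_of_succ_lt hk⟩ : Fin r)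
    have hc1 : ((⟨k+1, hk⟩ : Fin r) : ℕ) = k + 1 := rfl
    have hc2 : ((⟨k, Nat.lt_of_succ_lt hk⟩ : Fin r) : ℕ) = k := rfl
    rw [hc1] at ez ev
    have hkk : k + 1 + 1 = k + 2 := rfl
    rw [hkk] at ez ev
    rw [hc2] at ez2 ev2
    have h0 := hz i k
    have h2 := hz i (k + 2)
    have hmono : ((v⁻¹ ⟨k+1, hk⟩ : Fin r) : ℕ) ≤ i → ((v⁻¹ ⟨k, Nat.lt_of_succ_lt hk⟩ : Fin r) : ℕ) ≤ i := by
      intro h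
      have : ((v⁻¹ ⟨k, Nat.lt_of_succ_lt hk⟩ : Fin r) : ℕ) < ((v⁻¹ ⟨k+1, hk⟩ : Fin r) : ℕ) := hasc
      omega
    split_ifs at keyz keyv ez ev ez2 ev2 <;> omega
  · rw [Ncnt_swap_mul_ne z hk i jj hjj, Ncnt_swap_mul_ne v hk i jj hjj]
    exact hz i jj

end Blesec

section rowsec
variable {r : ℕ}

lemma partialSum_mono (f : ℕ → ℕ) : Monotone (partialSum f) := by
  intro e e' h
  exact Finset.sum_le_sum_of_subset (Finset.range_subset_range.mpr h)

lemma exists_total {f : ℕ → ℕ} (hf : IsCompositionOf f r) (b : Fin r) :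
    ∃ e : ℕ, (b : ℕ) < partialSum f (e + 1) := by
  obtain ⟨hfin, hsum⟩ := hf
  set E := hfin.toFinset with hE
  set e := (E.sup id) + 1 with he
  refine ⟨e, ?_⟩
  have hsub : Function.support f ⊆ ↑(Finset.range (e + 1)) := by
    intro x hx
    simp only [Finset.coe_range, Set.mem_Iio]
    have hxE : x ∈ E := hfin.mem_toFinset.mpr hx
    have : x ≤ E.sup id := Finset.le_sup (f := id) hxE
    omega
  have : ∑ᶠ i, f i = ∑ j ∈ Finset.range (e + 1), f j :=
    finsum_eq_finset_sum_of_support_subset f hsub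
  have hr : partialSum f (e + 1) = r := by
    rw [partialSum, ← this, hsum]
  rw [hr]
  exact b.isLt

lemma rowIndex_le_iff {f : ℕ → ℕ} (hf : IsCompositionOf f r) (b : Fin r) (i : ℕ) :
    rowIndex f b ≤ i ↔ (b : ℕ) < partialSum f (i + 1) := by
  constructor
  · intro h
    have hne : {j : ℕ | (b : ℕ) < partialSum f (j + 1)}.Nonempty := exists_total hf b
    have hmem := Nat.sInf_mem hne
    have : (b:ℕ) < partialSum f (rowIndex f b + 1) := hmem
    exact lt_of_lt_of_le this (partialSum_mono f (by omega))
  · intro h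
    exact Nat.sInf_le h

lemma rowIndex_mono {f : ℕ → ℕ} (hf : IsCompositionOf f r) {b₁ b₂ : Fin r} (h : b₁ ≤ b₂) :
    rowIndex f b₁ ≤ rowIndex f b₂ := by
  rw [rowIndex_le_iff hf]
  have := (rowIndex_le_iff hf b₂ (rowIndex f b₂)).mp (le_refl _)
  have hb : (b₁ : ℕ) ≤ (b₂ : ℕ) := h
  omega

end rowsec



section more
variable {r : ℕ}

lemma fin_trichot (w : Equiv.Perm (Fin r)) {k : ℕ} (hk : k + 1 < r) :
    w ⟨k, Nat.lt_of_succ_lt hk⟩ < w ⟨k+1, hk⟩ ∨ w ⟨k+1, hk⟩ < w ⟨k, Nat.lt_of_succ_lt hk⟩ := by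
  rcases lt_trichotomy (w ⟨k, Nat.lt_of_succ_lt hk⟩) (w ⟨k+1, hk⟩) with h | h | h
  · exact Or.inl h
  · exfalso
    have := w.injective h
    simp [Fin.ext_iff] at this
  · exact Or.inr h

lemma permLength_mul_swap_le (w : Equiv.Perm (Fin r)) {k : ℕ} (hk : k + 1 < r) :
    permLength (w * Equiv.swap ⟨k, Nat.lt_of_succ_lt hk⟩ ⟨k+1, hk⟩) ≤ permLength w + 1 := by
  rcases fin_trichot w hk with h | h
  · rw [(permLength_mul_swap w hk).1 h]
  · have := (permLength_mul_swap w hk).2 h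
    omega

lemma swap_flip {m : ℕ} (hm : m + 1 < r) {x y : Fin r} (hyx : y < x)
    (hs : Equiv.swap ⟨m, Nat.lt_of_succ_lt hm⟩ ⟨m+1, hm⟩ x < Equiv.swap ⟨m, Nat.lt_of_succ_lt hm⟩ ⟨m+1, hm⟩ y) :
    x = ⟨m+1, hm⟩ ∧ y = ⟨m, Nat.lt_of_succ_lt hm⟩ := by
  set a : Fin r := ⟨m, Nat.lt_of_succ_lt hm⟩
  set a' : Fin r := ⟨m+1, hm⟩
  have hv : ∀ c : Fin r, ((Equiv.swap a a' c : Fin r) : ℕ) =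
      if (c:ℕ) = m then m+1 else if (c:ℕ) = m+1 then m else (c:ℕ) := by
    intro c
    rcases eq_or_ne c a with rfl | hca
    · simp [a, a']
    · rcases eq_or_ne c a' with rfl | hca'
      · simp [a, a', Fin.ext_iff]
      · rw [Equiv.swap_apply_of_ne_of_ne hca hca']
        have h1 : (c:ℕ) ≠ m := fun h => hca (Fin.ext h)
        have h2 : (c:ℕ) ≠ m+1 := fun h => hca' (Fin.ext h)
        simp [h1, h2]
  have hyx' : (y:ℕ) < (x:ℕ) := hyx
  have hs' : ((Equiv.swap a a' x : Fin r) : ℕ) < ((Equiv.swap a a' y : Fin r) : ℕ) := hs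
  rw [hv x, hv y] at hs'
  constructor <;> apply Fin.ext <;> dsimp only [a, a'] <;>
    (revert hs'; split_ifs <;> omega)

end more

section hecke
variable {R : Type} [CommRing R] (q : R)
variable {r : ℕ} {H : Type} [Ring H] [Algebra R H]
variable (T : Equiv.Perm (Fin r) → H)

lemma hecke_left
    (hone : T 1 = 1)
    (hmul₁ : ∀ w s : Equiv.Perm (Fin r), IsSimpleTransposition s →
      permLength (w * s) = permLength w + 1 → T w * T s = T (w * s))
    (hmul₂ : ∀ w s : Equiv.Perm (Fin r), IsSimpleTransposition s →
      permLength (w * s) + 1 = permLength w → T w * T s = q • T (w * s) + (q - 1) • T w) :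
    ∀ (n : ℕ) (u : Equiv.Perm (Fin r)), permLength u = n → ∀ (k : ℕ) (hk : k + 1 < r),
      (permLength (Equiv.swap ⟨k, Nat.lt_of_succ_lt hk⟩ ⟨k+1, hk⟩ * u) = permLength u + 1 →
        T (Equiv.swap ⟨k, Nat.lt_of_succ_lt hk⟩ ⟨k+1, hk⟩) * T u
          = T (Equiv.swap ⟨k, Nat.lt_of_succ_lt hk⟩ ⟨k+1, hk⟩ * u)) ∧
      (permLength (Equiv.swap ⟨k, Nat.lt_of_succ_lt hk⟩ ⟨k+1, hk⟩ * u) + 1 = permLength u →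
        T (Equiv.swap ⟨k, Nat.lt_of_succ_lt hk⟩ ⟨k+1, hk⟩) * T u
          = q • T (Equiv.swap ⟨k, Nat.lt_of_succ_lt hk⟩ ⟨k+1, hk⟩ * u) + (q - 1) • T u) := by
  intro n
  induction n using Nat.strong_induction_on with
  | _ n IH =>
  intro u hu k hk
  set s : Equiv.Perm (Fin r) := Equiv.swap ⟨k, Nat.lt_of_succ_lt hk⟩ ⟨k+1, hk⟩ with hsdef
  by_cases h1 : u = 1
  · subst h1
    constructor
    · intro _
      rw [hone, mul_one, mul_one]
    · intro habs
      rw [permLength_one] at habs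
      omega
  · obtain ⟨m, hm, hd⟩ := exists_descent u h1
    set s' : Equiv.Perm (Fin r) := Equiv.swap ⟨m, Nat.lt_of_succ_lt hm⟩ ⟨m+1, hm⟩ with hs'def
    have hd' : permLength (u * s') + 1 = permLength u := (permLength_mul_swap u hm).2 hd
    set u₁ : Equiv.Perm (Fin r) := u * s' with hu₁def
    have hu₁s : u₁ * s' = u := by
      rw [hu₁def, mul_assoc, hs'def, Equiv.swap_mul_self, mul_one]
    have hlen₁ : permLength u₁ + 1 = permLength u := hd'
    have hT : T u = T u₁ * T s' := by
      rw [hmul₁ u₁ s' ⟨m, hm, rfl⟩ (by rw [hu₁s]; omega), hu₁s]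
    have hssu : s * (s * u) = u := by
      rw [← mul_assoc, hsdef, Equiv.swap_mul_self, one_mul]
    have hssu₁ : s * (s * u₁) = u₁ := by
      rw [← mul_assoc, hsdef, Equiv.swap_mul_self, one_mul]
    constructor
    · intro hasc
      rcases fin_trichot u₁⁻¹ hk with hlt | hgt
      · have hlen2 : permLength (s * u₁) = permLength u₁ + 1 := (permLength_swap_mul u₁ hk).1 hlt
        have hIH := (IH (permLength u₁) (by omega) u₁ rfl k hk).1 hlen2
        have hstep : permLength ((s * u₁) * s') = permLength (s * u₁) + 1 := by
          rw [mul_assoc, hu₁s]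
          omega
        calc T s * T u = T s * (T u₁ * T s') := by rw [← hT]
          _ = (T s * T u₁) * T s' := by rw [mul_assoc]
          _ = T (s * u₁) * T s' := by rw [hIH]
          _ = T ((s * u₁) * s') := hmul₁ _ _ ⟨m, hm, rfl⟩ hstep
          _ = T (s * u) := by rw [mul_assoc, hu₁s]
      · have hlen2 : permLength (s * u₁) + 1 = permLength u₁ := (permLength_swap_mul u₁ hk).2 hgt
        exfalso
        have hb : permLength ((s * u₁) * s') ≤ permLength (s * u₁) + 1 :=
          permLength_mul_swap_le (s * u₁) hm
        rw [mul_assoc, hu₁s] at hb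
        omega
    · intro hdesc
      rcases fin_trichot u₁⁻¹ hk with hlt | hgt
      · -- dihedral case : s * u = u * s'
        have hdesc_u : u⁻¹ ⟨k+1, hk⟩ < u⁻¹ ⟨k, Nat.lt_of_succ_lt hk⟩ := by
          rcases fin_trichot u⁻¹ hk with h | h
          · exfalso
            have h2 : permLength (s * u) = permLength u + 1 := (permLength_swap_mul u hk).1 h
            omega
          · exact h
        have hinv₁ : ∀ c : Fin r, u₁⁻¹ c = s' (u⁻¹ c) := by
          intro c
          rw [hu₁def, mul_inv_rev, hs'def, Equiv.swap_inv]
          rfl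
        have hflip := swap_flip hm hdesc_u (by
          rw [← hinv₁, ← hinv₁]
          exact hlt)
        have hPa : u ⟨m+1, hm⟩ = ⟨k, Nat.lt_of_succ_lt hk⟩ := by
          rw [← hflip.1]; simp
        have hPb : u ⟨m, Nat.lt_of_succ_lt hm⟩ = ⟨k+1, hk⟩ := by
          rw [← hflip.2]; simp
        have hsu : s * u = u * s' := by
          apply Equiv.ext
          intro x
          show s (u x) = u (s' x)
          by_cases hx1 : x = ⟨m, Nat.lt_of_succ_lt hm⟩
          · subst hx1
            rw [hPb, hs'def, Equiv.swap_apply_left, hsdef, Equiv.swap_apply_right, hPa]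
          · by_cases hx2 : x = ⟨m+1, hm⟩
            · subst hx2
              rw [hPa, hs'def, Equiv.swap_apply_right, hsdef, Equiv.swap_apply_left, hPb]
            · rw [hs'def, Equiv.swap_apply_of_ne_of_ne hx1 hx2]
              have hne1 : u x ≠ ⟨k, Nat.lt_of_succ_lt hk⟩ := by
                intro hcon
                exact hx2 (u.injective (by rw [hcon, hPa]))
              have hne2 : u x ≠ ⟨k+1, hk⟩ := by
                intro hcon
                exact hx1 (u.injective (by rw [hcon, hPb]))
              rw [hsdef, Equiv.swap_apply_of_ne_of_ne hne1 hne2]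
        have hlen2 : permLength (s * u₁) = permLength u₁ + 1 := (permLength_swap_mul u₁ hk).1 hlt
        have hsu₁ : s * u₁ = u := by
          rw [hu₁def, ← hsu, hssu]
        have hIH := (IH (permLength u₁) (by omega) u₁ rfl k hk).1 hlen2
        calc T s * T u = T s * (T u₁ * T s') := by rw [← hT]
          _ = (T s * T u₁) * T s' := by rw [mul_assoc]
          _ = T (s * u₁) * T s' := by rw [hIH]
          _ = T u * T s' := by rw [hsu₁]
          _ = q • T (u * s') + (q - 1) • T u := hmul₂ _ _ ⟨m, hm, rfl⟩ hd'
          _ = q • T (s * u) + (q - 1) • T u := by rw [hsu]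
      · have hlen2 : permLength (s * u₁) + 1 = permLength u₁ := (permLength_swap_mul u₁ hk).2 hgt
        have hIH := (IH (permLength u₁) (by omega) u₁ rfl k hk).2 hlen2
        have hstep : permLength ((s * u₁) * s') = permLength (s * u₁) + 1 := by
          rw [mul_assoc, hu₁s]
          omega
        calc T s * T u = T s * (T u₁ * T s') := by rw [← hT]
          _ = (T s * T u₁) * T s' := by rw [mul_assoc]
          _ = (q • T (s * u₁) + (q - 1) • T u₁) * T s' := by rw [hIH]
          _ = q • (T (s * u₁) * T s') + (q - 1) • (T u₁ * T s') := by
              rw [add_mul, smul_mul_assoc, smul_mul_assoc]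
          _ = q • T ((s * u₁) * s') + (q - 1) • T u := by
              rw [hmul₁ _ _ ⟨m, hm, rfl⟩ hstep, hT]
          _ = q • T (s * u) + (q - 1) • T u := by rw [mul_assoc, hu₁s]

end hecke


section main
variable {R : Type} [CommRing R] (q : R)
variable {r : ℕ} {H : Type} [Ring H] [Algebra R H]
variable (T : Equiv.Perm (Fin r) → H)

lemma lemB
    (hone : T 1 = 1)
    (hmul₁ : ∀ w s : Equiv.Perm (Fin r), IsSimpleTransposition s →
      permLength (w * s) = permLength w + 1 → T w * T s = T (w * s))
    (hmul₂ : ∀ w s : Equiv.Perm (Fin r), IsSimpleTransposition s →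
      permLength (w * s) + 1 = permLength w → T w * T s = q • T (w * s) + (q - 1) • T w) :
    ∀ (n : ℕ) (x : Equiv.Perm (Fin r)), permLength x = n → ∀ (y : Equiv.Perm (Fin r)),
      T x * T y ∈ Submodule.span R {h : H | ∃ z, Ble z x ∧ h = T (z * y)} := by
  intro n
  induction n using Nat.strong_induction_on with
  | _ n IH =>
  intro x hx y
  by_cases h1 : x = 1
  · subst h1
    rw [hone, one_mul]
    apply Submodule.subset_span
    exact ⟨1, Ble_refl 1, by rw [one_mul]⟩
  · have hxinv : x⁻¹ ≠ 1 := fun h => h1 (by rw [← inv_inv x, h, inv_one])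
    obtain ⟨k, hk, hd⟩ := exists_descent x⁻¹ hxinv
    set s : Equiv.Perm (Fin r) := Equiv.swap ⟨k, Nat.lt_of_succ_lt hk⟩ ⟨k+1, hk⟩ with hsdef
    have hlen : permLength (s * x) + 1 = permLength x := (permLength_swap_mul x hk).2 hd
    set x₁ : Equiv.Perm (Fin r) := s * x with hx₁def
    have hsx : s * x₁ = x := by
      rw [hx₁def, ← mul_assoc, hsdef, Equiv.swap_mul_self, one_mul]
    have hlen₁ : permLength (s * x₁) = permLength x₁ + 1 := by
      rw [hsx]; omega
    have hasc₁ : x₁⁻¹ ⟨k, Nat.lt_of_succ_lt hk⟩ < x₁⁻¹ ⟨k+1, hk⟩ := by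
      rcases fin_trichot x₁⁻¹ hk with h | h
      · exact h
      · exfalso
        have h2 : permLength (s * x₁) + 1 = permLength x₁ := (permLength_swap_mul x₁ hk).2 h
        omega
    have hTx : T x = T s * T x₁ := by
      rw [(hecke_left q T hone hmul₁ hmul₂ (permLength x₁) x₁ rfl k hk).1 hlen₁, hsx]
    have hIH := IH (permLength x₁) (by omega) x₁ rfl y
    have hgoal : ∀ h ∈ Submodule.span R {h : H | ∃ z, Ble z x₁ ∧ h = T (z * y)},
        T s * h ∈ Submodule.span R {h : H | ∃ z, Ble z x ∧ h = T (z * y)} := by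
      intro h hmem
      induction hmem using Submodule.span_induction with
      | mem h hgen =>
        obtain ⟨z, hz, rfl⟩ := hgen
        have hz_x : Ble z x := by
          have hb := Ble_swap_right x₁ hk hasc₁
          rw [hsx] at hb
          exact Ble_trans hz hb
        have hsz_x : Ble (s * z) x := by
          have hb := Ble_swap_mono hk hasc₁ hz
          rw [hsx] at hb
          exact hb
        rcases fin_trichot (z * y)⁻¹ hk with hzy | hzy
        · have hl2 : permLength (s * (z * y)) = permLength (z * y) + 1 :=
            (permLength_swap_mul (z * y) hk).1 hzy
          rw [(hecke_left q T hone hmul₁ hmul₂ (permLength (z * y)) (z * y) rfl k hk).1 hl2]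
          apply Submodule.subset_span
          exact ⟨s * z, hsz_x, by rw [mul_assoc]⟩
        · have hl2 : permLength (s * (z * y)) + 1 = permLength (z * y) :=
            (permLength_swap_mul (z * y) hk).2 hzy
          rw [(hecke_left q T hone hmul₁ hmul₂ (permLength (z * y)) (z * y) rfl k hk).2 hl2]
          apply Submodule.add_mem
          · apply Submodule.smul_mem
            apply Submodule.subset_span
            exact ⟨s * z, hsz_x, by rw [mul_assoc]⟩
          · apply Submodule.smul_mem
            apply Submodule.subset_span
            exact ⟨z, hz_x, rfl⟩
      | zero =>
        rw [mul_zero]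
        exact Submodule.zero_mem _
      | add a b _ _ ha hb =>
        rw [mul_add]
        exact Submodule.add_mem _ ha hb
      | smul c a _ ha =>
        rw [mul_smul_comm]
        exact Submodule.smul_mem _ c ha
    have := hgoal _ hIH
    rw [← mul_assoc, ← hTx] at this
    exact this

end main

section wlmsec
variable {r : ℕ}

lemma Wlm_apply {f g : ℕ → ℕ} {w : Equiv.Perm (Fin r)} (hw : w ∈ Wlm (r := r) f g) (c : Fin r) :
    rowIndex f (w c) ≤ rowIndex g c := by
  have := hw (rowIndex f (w c)) (w c) (le_refl _)
  simpa using this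

lemma Wlm_of_forall {f g : ℕ → ℕ} {w : Equiv.Perm (Fin r)}
    (h : ∀ c : Fin r, rowIndex f (w c) ≤ rowIndex g c) : w ∈ Wlm (r := r) f g := by
  intro i b hib
  have := h (w⁻¹ b)
  rw [show w (w⁻¹ b) = b from w.apply_symm_apply b] at this
  omega

lemma Wlm_comp {f g h : ℕ → ℕ} {v w : Equiv.Perm (Fin r)}
    (hv : v ∈ Wlm (r := r) f g) (hw : w ∈ Wlm (r := r) g h) : v * w ∈ Wlm (r := r) f h := by
  apply Wlm_of_forall
  intro c
  have h1 := Wlm_apply hv (w c)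
  have h2 := Wlm_apply hw c
  have h3 : (v * w) c = v (w c) := rfl
  rw [h3]
  omega

lemma Ble_Wlm {l g : ℕ → ℕ} (hl : IsCompositionOf l r) (hg : IsCompositionOf g r)
    {v z : Equiv.Perm (Fin r)} (hv : v ∈ Wlm (r := r) l g) (hz : Ble z v) :
    z ∈ Wlm (r := r) l g := by
  apply Wlm_of_forall
  intro c
  set i := rowIndex g c with hi
  by_contra hcon
  push_neg at hcon
  have hP : partialSum l (i + 1) ≤ ((z c : Fin r) : ℕ) := by
    have := (rowIndex_le_iff hl (z c) i)
    omega
  set P := partialSum l (i + 1) with hPdef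
  have h1 : 1 ≤ Ncnt z (c : ℕ) P := by
    rw [Ncnt, Finset.one_le_card]
    exact ⟨c, by simp [hP]⟩
  have h0 : Ncnt v (c : ℕ) P = 0 := by
    rw [Ncnt, Finset.card_eq_zero, Finset.filter_eq_empty_iff]
    rintro a -
    rintro ⟨ha1, ha2⟩
    have hle : a ≤ c := ha1
    have hrg : rowIndex g a ≤ i := rowIndex_mono hg hle
    have hrl : rowIndex l (v a) ≤ i := le_trans (Wlm_apply hv a) hrg
    have := (rowIndex_le_iff hl (v a) i).mp hrl
    omega
  have := hz (c : ℕ) P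
  omega

end wlmsec

theorem statement12 {R : Type} [CommRing R] [IsDomain R] (q : R) (hq : IsUnit q)
    {r : ℕ} {H : Type} [Ring H] [Algebra R H]
    (T : Equiv.Perm (Fin r) → H)
    (hbasis : LinearIndependent R T)
    (hspan : Submodule.span R (Set.range T) = ⊤)
    (hone : T 1 = 1)
    (hmul₁ : ∀ w s : Equiv.Perm (Fin r), IsSimpleTransposition s →
      permLength (w * s) = permLength w + 1 → T w * T s = T (w * s))
    (hmul₂ : ∀ w s : Equiv.Perm (Fin r), IsSimpleTransposition s →
      permLength (w * s) + 1 = permLength w → T w * T s = q • T (w * s) + (q - 1) • T w)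
    (l g nf : ℕ → ℕ) (hl : IsCompositionOf l r) (hg : IsCompositionOf g r)
    (hnf : IsCompositionOf nf r)
    (v w : Equiv.Perm (Fin r)) (hv : v ∈ Wlm (r := r) l g) (hw : w ∈ Wlm (r := r) g nf) :
    T v * T w ∈ Submodule.span R
      {x : H | ∃ u ∈ Wlm (r := r) l nf, x = T u} := by
  have hmain := lemB q T hone hmul₁ hmul₂ (permLength v) v rfl w
  have hsub : {h : H | ∃ z, Ble z v ∧ h = T (z * w)} ⊆
      Submodule.span R {x : H | ∃ u ∈ Wlm (r := r) l nf, x = T u} := by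
    rintro h ⟨z, hz, rfl⟩
    apply Submodule.subset_span
    refine ⟨z * w, ?_, rfl⟩
    exact Wlm_comp (Ble_Wlm hl hg hv hz) hw
  have hle : Submodule.span R {h : H | ∃ z, Ble z v ∧ h = T (z * w)} ≤
      Submodule.span R {x : H | ∃ u ∈ Wlm (r := r) l nf, x = T u} := by
    rw [Submodule.span_le]
    intro h hh
    exact hsub hh
  exact hle hmain
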